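/- arXiv:1001.0035 — 2 statements merged into one kernel-verified Lean document; each statement's English description precedes it below -/
import Mathlib

section
/- In particular, if A is an n×n matrix with det(A) = 0 and some cofactor of A is nonzero, then for all row indices i, j and column indices k, m the cofactors satisfy C_{i,k} · C_{j,m} = C_{i,m} · C_{j,k}. -/
open Matrix

/-- The `(i,j)` cofactor of a square matrix:
`C i j = (-1)^(i+j) * det (A with row i and column j removed)`. -/
def cofactor {n : ℕ} (A : Matrix (Fin (n + 1)) (Fin (n + 1)) ℂ) (i j : Fin (n + 1)) : ℂ :=
  (-1 : ℂ) ^ ((i : ℕ) + (j : ℕ)) * (A.submatrix i.succAbove j.succAbove).det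

lemma cofactor_eq_adjugate {n : ℕ} (A : Matrix (Fin (n + 1)) (Fin (n + 1)) ℂ)
    (i j : Fin (n + 1)) : cofactor A i j = adjugate A j i := by
  rw [adjugate_fin_succ_eq_det_submatrix, cofactor]

namespace Matrix

variable {K : Type*} [Field K] {n : ℕ}

lemma exists_eq_smul_of_mulVec_eq_zero (A : Matrix (Fin (n + 1)) (Fin (n + 1)) K)
    (i₀ j₀ : Fin (n + 1)) (hB : (A.submatrix i₀.succAbove j₀.succAbove).det ≠ 0) :
    ∃ e : Fin (n + 1) → K, ∀ u, A *ᵥ u = 0 → u = u j₀ • e := by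
  set B := A.submatrix i₀.succAbove j₀.succAbove
  set b : Fin n → K := fun r => -A (i₀.succAbove r) j₀
  refine ⟨Fin.insertNth j₀ 1 (B⁻¹ *ᵥ b), fun u hu => ?_⟩
  have hrest : B *ᵥ (u ∘ j₀.succAbove) = u j₀ • b := by
    funext r
    have hrow : ∑ q, A (i₀.succAbove r) q * u q = 0 := congrFun hu (i₀.succAbove r)
    rw [Fin.sum_univ_succAbove _ j₀] at hrow
    simp only [B, b, mulVec, dotProduct, Pi.smul_apply, smul_eq_mul, submatrix_apply,
      Function.comp_apply]
    linear_combination hrow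
  have hsolve : u ∘ j₀.succAbove = u j₀ • B⁻¹ *ᵥ b := by
    rw [← mulVec_smul, ← hrest, mulVec_mulVec,
      nonsing_inv_mul B (isUnit_iff_ne_zero.mpr hB), one_mulVec]
  funext p
  refine Fin.succAboveCases j₀ ?_ (fun s => ?_) p
  · simp
  · simpa [Fin.insertNth_apply_succAbove] using congrFun hsolve s

/-- The columns of `adjugate A` lie in the kernel of `A`, which is a line as soon as some
`n × n` minor is nonzero; if all of them vanish, `adjugate A = 0`. -/
theorem adjugate_mul_adjugate_comm_of_det_eq_zero (A : Matrix (Fin (n + 1)) (Fin (n + 1)) K)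
    (hA : A.det = 0) (i j k m : Fin (n + 1)) :
    adjugate A k i * adjugate A m j = adjugate A m i * adjugate A k j := by
  by_cases hminor : ∃ i₀ j₀ : Fin (n + 1), (A.submatrix i₀.succAbove j₀.succAbove).det ≠ 0
  · obtain ⟨i₀, j₀, hB⟩ := hminor
    obtain ⟨e, he⟩ := exists_eq_smul_of_mulVec_eq_zero A i₀ j₀ hB
    have hcol : ∀ q, A *ᵥ (fun p => adjugate A p q) = 0 := fun q => by
      funext p
      simpa [mul_adjugate, hA, mul_apply, mulVec, dotProduct] using
        congrFun (congrFun (mul_adjugate A) p) q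
    have hprop : ∀ p q, adjugate A p q = adjugate A j₀ q * e p := fun p q =>
      congrFun (he _ (hcol q)) p
    rw [hprop k i, hprop m j, hprop m i, hprop k j]
    ring
  · push Not at hminor
    simp [adjugate_fin_succ_eq_det_submatrix, hminor]

end Matrix

theorem statement6_general {n : ℕ} (A : Matrix (Fin (n + 1)) (Fin (n + 1)) ℂ)
    (hdet : A.det = 0) :
    ∀ i j k m : Fin (n + 1),
      cofactor A i k * cofactor A j m = cofactor A i m * cofactor A j k := by
  intro i j k m
  simp only [cofactor_eq_adjugate]
  exact adjugate_mul_adjugate_comm_of_det_eq_zero A hdet i j k m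

/-- if `det A = 0` and some cofactor of `A` is nonzero, then all `2 × 2`
minors of the cofactor matrix vanish: `C i k * C j m = C i m * C j k`. -/
theorem statement6 {n : ℕ} (A : Matrix (Fin (n + 1)) (Fin (n + 1)) ℂ)
    (hdet : A.det = 0) (hcof : ∃ i j, cofactor A i j ≠ 0) :
    ∀ i j k m : Fin (n + 1),
      cofactor A i k * cofactor A j m = cofactor A i m * cofactor A j k :=
  statement6_general A hdet
end

section
/- Let q ∈ ℂ with q^p = 1, p = 2l+1 odd, and let a, t : ℂ× → ℂ with t even (t(−λ) = t(λ)) and set d(λ) = q^N a(−qλ) for a fixed integer N. Let D₁₁(λ) be the 2l×2l tridiagonal matrix with diagonal entries t(q^h λ) for h = 1,...,2l, subdiagonal entries −a(q^h λ) (h = 2,...,2l), and superdiagonal entries −d(q^h λ) (h = 1,...,2l−1). Then det D₁₁(λ) = det D₁₁(−λ), i.e. the cofactor C₁₁(λ) of the quasi-tridiagonal matrix D(λ) is an even function of λ. -/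
/-!
By evenness of `t` and `d(λ) = q^N a(-qλ)`, the matrix `D₁₁(-λ)` and the transpose of
`D₁₁(λ)` have the same diagonal, and their off-diagonals differ by the scaling `ρ_α` with
`α = q^N` (super-diagonal times `α`, sub-diagonal times `α⁻¹`). That scaling is conjugation
by `diagonal (α ^ i)`, so it preserves the determinant.
-/

open Matrix

/-- The `2l × 2l` tridiagonal matrix `D₁₁(λ)` with diagonal entries `t (q^h λ)` for
`h = 1, ..., 2l`, subdiagonal entries `-a (q^h λ)` (`h = 2, ..., 2l`) and superdiagonal
entries `-d (q^h λ)` (`h = 1, ..., 2l-1`). Row `i` (`0`-based) corresponds to `h = i+1`. -/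
def D11 (l : ℕ) (a d t : ℂ → ℂ) (q lam : ℂ) : Matrix (Fin (2 * l)) (Fin (2 * l)) ℂ :=
  fun i j =>
    if (i : ℕ) = j then t (q ^ ((i : ℕ) + 1) * lam)
    else if (j : ℕ) = (i : ℕ) + 1 then -d (q ^ ((i : ℕ) + 1) * lam)
    else if (i : ℕ) = (j : ℕ) + 1 then -a (q ^ ((i : ℕ) + 1) * lam)
    else 0

namespace Matrix

variable {R : Type*} [CommRing R] {n : ℕ}

/-- Both off-diagonals are indexed by the smaller of the two indices: `u i` sits at
`(i, i+1)` and `v j` at `(j+1, j)`. -/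
def tridiagonal (n : ℕ) (δ u v : ℕ → R) : Matrix (Fin n) (Fin n) R :=
  fun i j =>
    if (i : ℕ) = j then δ i
    else if (j : ℕ) = i + 1 then u i
    else if (i : ℕ) = j + 1 then v j
    else 0

theorem tridiagonal_transpose (δ u v : ℕ → R) :
    (tridiagonal n δ u v)ᵀ = tridiagonal n δ v u := by
  ext i j
  simp only [transpose_apply, tridiagonal]
  split_ifs <;> first | rfl | omega | congr 1

theorem diagonal_pow_mul_tridiagonal_scale (δ u v : ℕ → R) (α : Rˣ) :
    diagonal (fun i : Fin n => ((α ^ (i : ℕ) : Rˣ) : R)) *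
        tridiagonal n δ (fun i => α * u i) (fun i => ↑α⁻¹ * v i) =
      tridiagonal n δ u v * diagonal (fun i : Fin n => ((α ^ (i : ℕ) : Rˣ) : R)) := by
  ext i j
  simp only [diagonal_mul, mul_diagonal, tridiagonal]
  split_ifs with hij hsup hsub
  · rw [hij, mul_comm]
  · rw [hsup, pow_succ, Units.val_mul]; ring
  · rw [hsub, pow_succ, Units.val_mul, mul_assoc, ← mul_assoc (α : R), Units.mul_inv, one_mul,
      mul_comm]
  · simp

theorem det_tridiagonal_scale (δ u v : ℕ → R) (α : Rˣ) :
    (tridiagonal n δ (fun i => α * u i) (fun i => ↑α⁻¹ * v i)).det =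
      (tridiagonal n δ u v).det := by
  have hS : IsUnit (diagonal (fun i : Fin n => ((α ^ (i : ℕ) : Rˣ) : R))).det := by
    rw [det_diagonal]
    exact IsUnit.prod_univ_iff.mpr fun i => Units.isUnit _
  have h := congrArg det (diagonal_pow_mul_tridiagonal_scale (n := n) δ u v α)
  rw [det_mul, det_mul, mul_comm (tridiagonal n δ u v).det] at h
  exact hS.mul_left_cancel h

end Matrix

theorem D11_eq_tridiagonal (l : ℕ) (a d t : ℂ → ℂ) (q lam : ℂ) :
    D11 l a d t q lam =
      tridiagonal (2 * l) (fun h => t (q ^ (h + 1) * lam)) (fun h => -d (q ^ (h + 1) * lam))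
        (fun h => -a (q ^ (h + 2) * lam)) := by
  ext i j
  simp only [D11, tridiagonal]
  split_ifs with _ _ hsub <;> first | rfl | rw [hsub]

theorem statement10_general (l : ℕ) (q : ℂ) (hq : q ^ (2 * l + 1) = 1)
    (N : ℤ) (a d t : ℂ → ℂ)
    (ht : ∀ lam : ℂ, lam ≠ 0 → t (-lam) = t lam)
    (hd : ∀ lam : ℂ, d lam = q ^ N * a (-(q * lam))) :
    ∀ lam : ℂ, lam ≠ 0 → (D11 l a d t q lam).det = (D11 l a d t q (-lam)).det := by
  intro lam _
  have hq0 : q ^ N ≠ 0 := zpow_ne_zero N (by rintro rfl; simp at hq)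
  have t_neg (x : ℂ) : t (-x) = t x := by
    rcases eq_or_ne x 0 with rfl | hx
    · rw [neg_zero]
    · exact ht x hx
  rw [← det_transpose, D11_eq_tridiagonal, D11_eq_tridiagonal, tridiagonal_transpose,
    ← det_tridiagonal_scale _ _ _ (Units.mk0 _ hq0)]
  congr 2 <;> funext h
  · rw [mul_neg, t_neg]
  · rw [hd, Units.val_mk0]
    ring_nf
  · rw [hd, Units.val_inv_eq_inv_val, Units.val_mk0, mul_neg, inv_mul_cancel_left₀ hq0]
    ring_nf

/-- with `q^(2l+1) = 1`, `t` even and `d(λ) = q^N a(-qλ)`, the cofactor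
`C₁₁(λ) = det D₁₁(λ)` is an even function of `λ` on `ℂ×`. -/
theorem statement10 (l : ℕ) (hl : 0 < l) (q : ℂ) (hq : q ^ (2 * l + 1) = 1)
    (N : ℤ) (a d t : ℂ → ℂ)
    (ht : ∀ lam : ℂ, lam ≠ 0 → t (-lam) = t lam)
    (hd : ∀ lam : ℂ, d lam = q ^ N * a (-(q * lam))) :
    ∀ lam : ℂ, lam ≠ 0 → (D11 l a d t q lam).det = (D11 l a d t q (-lam)).det :=
  statement10_general l q hq N a d t ht hd
end
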